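/- arXiv:1602.08049 — 5 statements merged into one kernel-verified Lean document; each statement's English description precedes it below -/
import Mathlib

section
/- If a linear map E on operators is translationally covariant, i.e., satisfies e^{-ixL} E(A) e^{ixL} = E(e^{-ixL} A e^{ixL}) for all x ∈ ℝ and all operators A, then E commutes with the dephasing map D associated with the eigenspaces of L: E ∘ D = D ∘ E. -/
open Matrix

/-- The observable `L = Σ_l λ_l Π_l` built from spectral projectors. -/
noncomputable def Lof {n k : ℕ} (Pr : Fin k → Matrix (Fin n) (Fin n) ℂ)
    (lam : Fin k → ℝ) : Matrix (Fin n) (Fin n) ℂ :=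
  ∑ l, (lam l : ℂ) • Pr l

/-!
The blocks `Π_l A Π_{l'}` are eigenvectors of `U_x` with eigenvalue `e^{-ix(λ_l - λ_{l'})}`,
so a covariant `E` maps them to operators whose blocks `Π_m E(Π_l A Π_{l'}) Π_{m'}` carry the
same eigenvalue. For a block whose frequency `λ_m - λ_{m'}` differs from `λ_l - λ_{l'}`, a single
`x` separating the two phases forces it to vanish. Since the `λ_l` are distinct, `E` therefore
maps diagonal blocks to block-diagonal operators and off-diagonal blocks to operators with zero
diagonal blocks, which is exactly `E ∘ D = D ∘ E`.
-/

open Complex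

variable {ι : Type*} [Fintype ι]

namespace OrthogonalIdempotents

variable {R B : Type*} [CommSemiring R] [Semiring B] [Algebra R B] {e : ι → B}

theorem sum_smul_mul (he : OrthogonalIdempotents e) (f : ι → R) (j : ι) :
    (∑ i, f i • e i) * e j = f j • e j := by
  classical
  simp [Finset.sum_mul, he.mul_eq]

theorem mul_sum_smul (he : OrthogonalIdempotents e) (f : ι → R) (j : ι) :
    e j * (∑ i, f i • e i) = f j • e j := by
  classical
  simp [Finset.mul_sum, he.mul_eq]

theorem sum_smul_mul_mul_mul_sum_smul (he : OrthogonalIdempotents e) (u v : ι → R)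
    (l l' : ι) (X : B) :
    (∑ i, u i • e i) * (e l * X * e l') * (∑ i, v i • e i) = (u l * v l') • (e l * X * e l') := by
  rw [← mul_assoc, ← mul_assoc, he.sum_smul_mul, mul_assoc, he.mul_sum_smul]
  simp only [smul_mul_assoc, mul_smul_comm, smul_smul, mul_comm]

theorem mul_sum_smul_mul_mul_sum_smul_mul (he : OrthogonalIdempotents e) (u v : ι → R)
    (m m' : ι) (X : B) :
    e m * ((∑ i, u i • e i) * X * (∑ i, v i • e i)) * e m' = (u m * v m') • (e m * X * e m') := by
  rw [mul_assoc _ _ (e m'), mul_assoc _ (∑ i, v i • e i), he.sum_smul_mul, ← mul_assoc (e m),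
    ← mul_assoc (e m), he.mul_sum_smul]
  simp only [smul_mul_assoc, mul_smul_comm, smul_smul, mul_assoc, mul_comm]

end OrthogonalIdempotents

theorem OrthogonalIdempotents.mul_map_mul_eq_zero {K B : Type*} [Field K] [Ring B] [Algebra K B]
    {e : ι → B} (he : OrthogonalIdempotents e) (E : B →ₗ[K] B) (u v : ι → K)
    (hE : ∀ A, (∑ i, u i • e i) * E A * (∑ i, v i • e i) =
      E ((∑ i, u i • e i) * A * (∑ i, v i • e i)))
    {l l' m m' : ι} (h : u m * v m' ≠ u l * v l') (A : B) :
    e m * E (e l * A * e l') * e m' = 0 := by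
  have key : (u m * v m') • (e m * E (e l * A * e l') * e m') =
      (u l * v l') • (e m * E (e l * A * e l') * e m') := by
    rw [← he.mul_sum_smul_mul_mul_sum_smul_mul, hE, he.sum_smul_mul_mul_mul_sum_smul, map_smul,
      mul_smul_comm, smul_mul_assoc]
  rwa [← sub_eq_zero, ← sub_smul, smul_eq_zero, or_iff_right (sub_ne_zero.mpr h)] at key

namespace CompleteOrthogonalIdempotents

section

variable {B : Type*} [Semiring B] {e : ι → B}

theorem sum_sum_mul_mul (he : CompleteOrthogonalIdempotents e) (x : B) :
    ∑ i, ∑ j, e i * x * e j = x := by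
  simp [← Finset.mul_sum, ← Finset.sum_mul, he.complete]

theorem map_sum_mul_mul {F : Type*} [FunLike F B B] [AddMonoidHomClass F B B]
    (he : CompleteOrthogonalIdempotents e) (E : F)
    (hoff : ∀ l l' m, l ≠ l' → ∀ A, e m * E (e l * A * e l') * e m = 0)
    (hdiag : ∀ l m m', m ≠ m' → ∀ A, e m * E (e l * A * e l) * e m' = 0) (A : B) :
    E (∑ l, e l * A * e l) = ∑ l, e l * E A * e l := calc
  E (∑ l, e l * A * e l) = ∑ l, ∑ m, ∑ m', e m * E (e l * A * e l) * e m' := by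
    simp only [map_sum, he.sum_sum_mul_mul]
  _ = ∑ l, ∑ m, e m * E (e l * A * e l) * e m :=
    Finset.sum_congr rfl fun l _ => Finset.sum_congr rfl fun m _ =>
      Fintype.sum_eq_single m fun m' hm' => hdiag l m m' (Ne.symm hm') A
  _ = ∑ m, ∑ l, ∑ l', e m * E (e l * A * e l') * e m := by
    rw [Finset.sum_comm]
    exact Finset.sum_congr rfl fun m _ => Finset.sum_congr rfl fun l _ =>
      (Fintype.sum_eq_single l fun l' hl' => hoff l l' m (Ne.symm hl') A).symm
  _ = ∑ m, e m * E A * e m := by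
    simp only [← Finset.mul_sum, ← Finset.sum_mul, ← map_sum, he.complete, one_mul, mul_one]

variable {R : Type*} [CommSemiring R] [Algebra R B]

noncomputable def piAlgHom (he : CompleteOrthogonalIdempotents e) : (ι → R) →ₐ[R] B :=
  AlgHom.ofLinearMap (Fintype.linearCombination R e)
    (by simp [Fintype.linearCombination_apply, he.complete])
    (fun f g => by
      simp only [Fintype.linearCombination_apply, Pi.mul_apply, Finset.mul_sum, mul_smul_comm,
        he.toOrthogonalIdempotents.sum_smul_mul, smul_smul, mul_comm])

@[simp]
theorem piAlgHom_apply (he : CompleteOrthogonalIdempotents e) (f : ι → R) :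
    he.piAlgHom f = ∑ i, f i • e i :=
  Fintype.linearCombination_apply R e f

end

theorem exp_sum_smul {B : Type*} [NormedRing B] [NormedAlgebra ℂ B] [Algebra ℚ B]
    {e : ι → B} (he : CompleteOrthogonalIdempotents e) (f : ι → ℂ) :
    NormedSpace.exp (∑ i, f i • e i) = ∑ i, cexp (f i) • e i := by
  have hcont : Continuous he.piAlgHom :=
    (he.piAlgHom.toLinearMap : (ι → ℂ) →ₗ[ℂ] B).continuous_of_finiteDimensional
  simpa [Pi.exp_def, ← Complex.exp_eq_exp_ℂ] using (NormedSpace.map_exp he.piAlgHom hcont f).symm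

end CompleteOrthogonalIdempotents

theorem exp_smul_Lof {n k : ℕ} {Pr : Fin k → Matrix (Fin n) (Fin n) ℂ}
    (hPr : CompleteOrthogonalIdempotents Pr) (lam : Fin k → ℝ) (c : ℂ) :
    NormedSpace.exp (c • Lof Pr lam) = ∑ l, cexp (c * lam l) • Pr l := by
  let _ : NormedRing (Matrix (Fin n) (Fin n) ℂ) := Matrix.linftyOpNormedRing
  let _ : NormedAlgebra ℂ (Matrix (Fin n) (Fin n) ℂ) := Matrix.linftyOpNormedAlgebra
  simp only [Lof, Finset.smul_sum, smul_smul]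
  exact hPr.exp_sum_smul _

theorem exists_cexp_mul_cexp_ne {a a' b b' : ℝ} (h : a - a' ≠ b - b') :
    ∃ x : ℝ, cexp (-(I * x) * a) * cexp (I * x * a') ≠ cexp (-(I * x) * b) * cexp (I * x * b') := by
  set x := Real.pi / ((b - b') - (a - a'))
  refine ⟨x, fun heq => ?_⟩
  have hx : (x : ℂ) * ((b - b') - (a - a')) = Real.pi := by
    have : ((b : ℂ) - b') - (a - a') ≠ 0 := by exact_mod_cast sub_ne_zero.mpr h.symm
    simp only [x]; push_cast; field_simp
  have hshift : -(I * x) * a + I * x * a' = Real.pi * I + (-(I * x) * b + I * x * b') := by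
    linear_combination I * hx
  rw [← exp_add, ← exp_add, hshift, exp_add, exp_pi_mul_I, neg_one_mul, neg_eq_self] at heq
  exact exp_ne_zero _ heq

theorem translationCovariant_implies_dephasingCovariant_general {n k : ℕ}
    (Pr : Fin k → Matrix (Fin n) (Fin n) ℂ)
    (horth : ∀ l l', Pr l * Pr l' = if l = l' then Pr l else 0)
    (hsum : ∑ l, Pr l = 1)
    (lam : Fin k → ℝ) (hdist : Function.Injective lam)
    (E : Matrix (Fin n) (Fin n) ℂ →ₗ[ℂ] Matrix (Fin n) (Fin n) ℂ)
    (hcov : ∀ (x : ℝ) (A : Matrix (Fin n) (Fin n) ℂ),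
      NormedSpace.exp ((-(Complex.I * (x : ℂ))) • Lof Pr lam) * E A *
          NormedSpace.exp ((Complex.I * (x : ℂ)) • Lof Pr lam) =
        E (NormedSpace.exp ((-(Complex.I * (x : ℂ))) • Lof Pr lam) * A *
            NormedSpace.exp ((Complex.I * (x : ℂ)) • Lof Pr lam))) :
    ∀ A : Matrix (Fin n) (Fin n) ℂ,
      E (∑ l, Pr l * A * Pr l) = ∑ l, Pr l * E A * Pr l := by
  have hPr : CompleteOrthogonalIdempotents Pr :=
    CompleteOrthogonalIdempotents.iff_ortho_complete.mpr
      ⟨fun l l' hne => by simpa [hne] using horth l l', hsum⟩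
  have hblock : ∀ l l' m m', lam m - lam m' ≠ lam l - lam l' →
      ∀ A, Pr m * E (Pr l * A * Pr l') * Pr m' = 0 := by
    intro l l' m m' hfreq A
    obtain ⟨x, hx⟩ := exists_cexp_mul_cexp_ne hfreq
    refine hPr.toOrthogonalIdempotents.mul_map_mul_eq_zero E (fun i => cexp (-(I * x) * lam i))
      (fun i => cexp (I * x * lam i)) (fun A => ?_) hx A
    simpa only [exp_smul_Lof hPr] using hcov x A
  refine hPr.map_sum_mul_mul E (fun l l' m hl A => hblock l l' m m ?_ A)
    (fun l m m' hm A => hblock l l m m' ?_ A)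
  · rw [sub_self, ne_comm, sub_ne_zero]
    exact hdist.ne hl
  · rw [sub_self, sub_ne_zero]
    exact hdist.ne hm

/-- If a linear map `E` on operators is translationally covariant, i.e.
`e^{-ixL} E(A) e^{ixL} = E(e^{-ixL} A e^{ixL})` for all real `x` and operators `A`,
then `E` commutes with the dephasing map associated to the eigenspaces of `L`. -/
theorem translationCovariant_implies_dephasingCovariant {n k : ℕ}
    (Pr : Fin k → Matrix (Fin n) (Fin n) ℂ)
    (hherm : ∀ l, (Pr l).IsHermitian)
    (horth : ∀ l l', Pr l * Pr l' = if l = l' then Pr l else 0)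
    (hsum : ∑ l, Pr l = 1)
    (lam : Fin k → ℝ) (hdist : Function.Injective lam)
    (E : Matrix (Fin n) (Fin n) ℂ →ₗ[ℂ] Matrix (Fin n) (Fin n) ℂ)
    (hcov : ∀ (x : ℝ) (A : Matrix (Fin n) (Fin n) ℂ),
      NormedSpace.exp ((-(Complex.I * (x : ℂ))) • Lof Pr lam) * E A *
          NormedSpace.exp ((Complex.I * (x : ℂ)) • Lof Pr lam) =
        E (NormedSpace.exp ((-(Complex.I * (x : ℂ))) • Lof Pr lam) * A *
            NormedSpace.exp ((Complex.I * (x : ℂ)) • Lof Pr lam))) :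
    ∀ A : Matrix (Fin n) (Fin n) ℂ,
      E (∑ l, Pr l * A * Pr l) = ∑ l, Pr l * E A * Pr l :=
  translationCovariant_implies_dephasingCovariant_general Pr horth hsum lam hdist E hcov
end

section
/- There exists a quantum channel (completely positive trace-preserving map) on a qubit that is incoherence-preserving with respect to the computational basis but not dephasing-covariant. Specifically, E(ρ) = |0⟩⟨0| Tr(|+⟩⟨+| ρ) + |1⟩⟨1| Tr(|−⟩⟨−| ρ) satisfies D ∘ E = E but E ∘ D ≠ E, where |±⟩ = (|0⟩ ± |1⟩)/√2. -/
open Matrix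

/-- The projector `|+⟩⟨+|` on a qubit, with `|+⟩ = (|0⟩ + |1⟩)/√2`. -/
noncomputable def Pplus : Matrix (Fin 2) (Fin 2) ℂ :=
  Matrix.vecMulVec ![(Real.sqrt 2 : ℂ)⁻¹, (Real.sqrt 2 : ℂ)⁻¹]
    (star ![(Real.sqrt 2 : ℂ)⁻¹, (Real.sqrt 2 : ℂ)⁻¹])

/-- The projector `|−⟩⟨−|` on a qubit, with `|−⟩ = (|0⟩ − |1⟩)/√2`. -/
noncomputable def Pminus : Matrix (Fin 2) (Fin 2) ℂ :=
  Matrix.vecMulVec ![(Real.sqrt 2 : ℂ)⁻¹, -(Real.sqrt 2 : ℂ)⁻¹]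
    (star ![(Real.sqrt 2 : ℂ)⁻¹, -(Real.sqrt 2 : ℂ)⁻¹])

/-- The qubit dephasing map with respect to the computational basis. -/
def Dqubit (A : Matrix (Fin 2) (Fin 2) ℂ) : Matrix (Fin 2) (Fin 2) ℂ :=
  Matrix.diagonal fun i => A i i

/-- The map `E(ρ) = |0⟩⟨0| Tr(|+⟩⟨+| ρ) + |1⟩⟨1| Tr(|−⟩⟨−| ρ)`. -/
noncomputable def Emap (A : Matrix (Fin 2) (Fin 2) ℂ) : Matrix (Fin 2) (Fin 2) ℂ :=
  Matrix.trace (Pplus * A) • Matrix.single 0 0 1 +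
    Matrix.trace (Pminus * A) • Matrix.single 1 1 1

/- Both `Emap ρ` and `Dqubit ρ` are diagonal, so `D ∘ E = E`, and `|+⟩⟨+| + |−⟩⟨−| = 1` makes `E`
trace preserving. But measuring in the `|±⟩` basis detects coherence, which `D` destroys:
`E (|0⟩⟨1|)` has `(0, 0)` entry `1/2`, whereas `D (|0⟩⟨1|) = 0`. -/

lemma inv_sqrt_two_mul_self : (Real.sqrt 2 : ℂ)⁻¹ * (Real.sqrt 2 : ℂ)⁻¹ = 1 / 2 := by
  rw [← mul_inv, ← Complex.ofReal_mul, Real.mul_self_sqrt zero_le_two]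
  norm_num

lemma Pplus_apply (i j : Fin 2) : Pplus i j = 1 / 2 := by
  fin_cases i <;> fin_cases j <;> simp [Pplus, vecMulVec_apply, inv_sqrt_two_mul_self]

lemma Pminus_apply (i j : Fin 2) : Pminus i j = if i = j then 1 / 2 else -(1 / 2) := by
  fin_cases i <;> fin_cases j <;> simp [Pminus, vecMulVec_apply, inv_sqrt_two_mul_self]

lemma Pplus_add_Pminus : Pplus + Pminus = 1 := by
  ext i j
  rw [Matrix.add_apply, Pplus_apply, Pminus_apply, one_apply]
  split_ifs <;> norm_num

lemma Dqubit_eq_diagonal_diag (A : Matrix (Fin 2) (Fin 2) ℂ) : Dqubit A = diagonal A.diag :=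
  rfl

lemma Dqubit_diagonal (d : Fin 2 → ℂ) : Dqubit (diagonal d) = diagonal d := by
  rw [Dqubit_eq_diagonal_diag, diag_diagonal]

lemma Dqubit_single_of_ne {i j : Fin 2} (h : i ≠ j) (c : ℂ) : Dqubit (single i j c) = 0 := by
  rw [Dqubit_eq_diagonal_diag, diag_single_of_ne i j c h, diagonal_zero']

lemma Emap_eq_diagonal (A : Matrix (Fin 2) (Fin 2) ℂ) :
    Emap A = diagonal ![(Pplus * A).trace, (Pminus * A).trace] := by
  ext i j
  fin_cases i <;> fin_cases j <;> simp [Emap]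

lemma trace_Emap (A : Matrix (Fin 2) (Fin 2) ℂ) : (Emap A).trace = A.trace := by
  rw [Emap_eq_diagonal, trace_diagonal, Fin.sum_univ_two, Matrix.cons_val_zero,
    Matrix.cons_val_one, Matrix.cons_val_zero, ← trace_add, ← add_mul, Pplus_add_Pminus,
    one_mul]

lemma Emap_zero : Emap 0 = 0 := by
  simp [Emap]

lemma Emap_single_zero_one_apply_zero_zero : Emap (single 0 1 1) 0 0 = 1 / 2 := by
  simp [Emap_eq_diagonal, trace_mul_single, Pplus_apply]

/-- There is a qubit quantum channel that is incoherence-preserving with respect to the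
computational basis but not dephasing-covariant: the map `Emap` is trace preserving,
satisfies `D ∘ E = E` (in particular it maps every state to an incoherent one), but
`E ∘ D ≠ E`. -/
theorem incoherencePreserving_not_dephasingCovariant :
    (∀ A : Matrix (Fin 2) (Fin 2) ℂ, (Emap A).trace = A.trace) ∧
    (∀ A : Matrix (Fin 2) (Fin 2) ℂ, Dqubit (Emap A) = Emap A) ∧
    ¬ (∀ A : Matrix (Fin 2) (Fin 2) ℂ, Emap (Dqubit A) = Emap A) := by
  refine ⟨trace_Emap, fun A => ?_, fun hcov => ?_⟩
  · rw [Emap_eq_diagonal, Dqubit_diagonal]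
  · have h := congr_fun₂ (hcov (single 0 1 1)) 0 0
    rw [Dqubit_single_of_ne zero_ne_one, Emap_zero, Emap_single_zero_one_apply_zero_zero] at h
    norm_num at h
end

section
/- If σ is an incoherent state on the ancilla (D_A(σ) = σ), E is an incoherent effect on the output ancilla (D_{A'}(E) = E), and V is a dephasing-covariant unitary channel on the composite (V ∘ D_{SA} = D_{SA} ∘ V, where D_{SA} = D_S ⊗ D_A = D_{S'} ⊗ D_{A'}), then the operation E(ρ) = Tr_{A'}(E · V(ρ ⊗ σ)) is dephasing-covariant: E ∘ D_S = D_{S'} ∘ E. -/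
open Matrix
open scoped Kronecker ComplexOrder

/-- Partial trace over the ancilla factor. -/
noncomputable def ptrA {s a : ℕ} (M : Matrix (Fin s × Fin a) (Fin s × Fin a) ℂ) :
    Matrix (Fin s) (Fin s) ℂ :=
  Matrix.of fun i j => ∑ p : Fin a, M (i, p) (j, p)

/-!
Since `σ` is incoherent, `D_S(ρ) ⊗ σ = D_{SA}(ρ ⊗ σ)`, and covariance of `V` moves `D_{SA}` past
the unitary. In `Tr_A((1 ⊗ E) · D_{SA}(Y))` the system projectors `P_l ⊗ 1` come out of the
partial trace, while by cyclicity of the trace over the ancilla the projectors `1 ⊗ Q_m` land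
on `E`, which turns `E` into `D_A(E) = E`. What is left is `Σ_l P_l Tr_A((1 ⊗ E) · Y) P_l`.
-/

namespace Matrix

variable {ι l m n p α : Type*} [CommSemiring α]

theorem sum_kronecker (t : Finset ι) (A : ι → Matrix l m α) (B : Matrix n p α) :
    (∑ i ∈ t, A i) ⊗ₖ B = ∑ i ∈ t, A i ⊗ₖ B := by
  ext
  simp [Matrix.sum_apply, Finset.sum_mul]

theorem kronecker_sum (t : Finset ι) (A : Matrix l m α) (B : ι → Matrix n p α) :
    A ⊗ₖ (∑ i ∈ t, B i) = ∑ i ∈ t, A ⊗ₖ B i := by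
  ext
  simp [Matrix.sum_apply, Finset.mul_sum]

theorem sum_conj_kronecker_sum_conj {κ : Type*} [Fintype ι] [Fintype κ] [Fintype m] [Fintype n]
    (P : ι → Matrix m m α) (Q : κ → Matrix n n α) (A : Matrix m m α) (B : Matrix n n α) :
    (∑ i, P i * A * P i) ⊗ₖ (∑ j, Q j * B * Q j) =
      ∑ i, ∑ j, (P i ⊗ₖ Q j) * (A ⊗ₖ B) * (P i ⊗ₖ Q j) := by
  rw [sum_kronecker]
  simp only [kronecker_sum, mul_kronecker_mul]

end Matrix

section PartialTrace

variable {s a : ℕ}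

theorem ptrA_sum {ι : Type*} [Fintype ι] (M : ι → Matrix (Fin s × Fin a) (Fin s × Fin a) ℂ) :
    ptrA (∑ i, M i) = ∑ i, ptrA (M i) := by
  ext
  simp only [ptrA, Matrix.of_apply, Matrix.sum_apply]
  exact Finset.sum_comm

theorem ptrA_kronecker_one_mul (A : Matrix (Fin s) (Fin s) ℂ)
    (M : Matrix (Fin s × Fin a) (Fin s × Fin a) ℂ) :
    ptrA ((A ⊗ₖ (1 : Matrix (Fin a) (Fin a) ℂ)) * M) = A * ptrA M := by
  ext
  simp only [ptrA, Matrix.of_apply, Matrix.mul_apply, Fintype.sum_prod_type,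
    kronecker_apply, Matrix.one_apply]
  rw [Finset.sum_comm]
  simp [Finset.mul_sum]

theorem ptrA_mul_kronecker_one (A : Matrix (Fin s) (Fin s) ℂ)
    (M : Matrix (Fin s × Fin a) (Fin s × Fin a) ℂ) :
    ptrA (M * (A ⊗ₖ (1 : Matrix (Fin a) (Fin a) ℂ))) = ptrA M * A := by
  ext
  simp only [ptrA, Matrix.of_apply, Matrix.mul_apply, Fintype.sum_prod_type,
    kronecker_apply, Matrix.one_apply]
  rw [Finset.sum_comm]
  simp [Finset.sum_mul]

theorem ptrA_one_kronecker_mul_comm (B : Matrix (Fin a) (Fin a) ℂ)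
    (M : Matrix (Fin s × Fin a) (Fin s × Fin a) ℂ) :
    ptrA (((1 : Matrix (Fin s) (Fin s) ℂ) ⊗ₖ B) * M) =
      ptrA (M * ((1 : Matrix (Fin s) (Fin s) ℂ) ⊗ₖ B)) := by
  ext
  simp only [ptrA, Matrix.of_apply, Matrix.mul_apply, Fintype.sum_prod_type,
    kronecker_apply, Matrix.one_apply, ite_mul, mul_ite, one_mul, zero_mul, mul_zero,
    Finset.sum_ite_irrel, Finset.sum_const_zero, Finset.sum_ite_eq, Finset.sum_ite_eq',
    Finset.mem_univ, ↓reduceIte]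
  rw [Finset.sum_comm]
  simp only [mul_comm]

theorem ptrA_one_kronecker_mul_conj_kronecker (E Q : Matrix (Fin a) (Fin a) ℂ)
    (P : Matrix (Fin s) (Fin s) ℂ) (X : Matrix (Fin s × Fin a) (Fin s × Fin a) ℂ) :
    ptrA (((1 : Matrix (Fin s) (Fin s) ℂ) ⊗ₖ E) * ((P ⊗ₖ Q) * X * (P ⊗ₖ Q))) =
      P * ptrA (((1 : Matrix (Fin s) (Fin s) ℂ) ⊗ₖ (Q * E * Q)) * X) * P := by
  set I : Matrix (Fin s) (Fin s) ℂ := 1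
  set J : Matrix (Fin a) (Fin a) ℂ := 1
  have hsplit : (I ⊗ₖ E) * ((P ⊗ₖ Q) * X * (P ⊗ₖ Q)) =
      (P ⊗ₖ J) * ((I ⊗ₖ (E * Q)) * X * (I ⊗ₖ Q)) * (P ⊗ₖ J) := by
    have hl : (I ⊗ₖ E) * (P ⊗ₖ Q) = (P ⊗ₖ J) * (I ⊗ₖ (E * Q)) := by
      simp only [← mul_kronecker_mul, I, J, one_mul, mul_one]
    have hr : P ⊗ₖ Q = (I ⊗ₖ Q) * (P ⊗ₖ J) := by
      simp only [← mul_kronecker_mul, I, J, one_mul, mul_one]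
    rw [← Matrix.mul_assoc, ← Matrix.mul_assoc, hl, hr]
    simp only [Matrix.mul_assoc]
  rw [hsplit, ptrA_mul_kronecker_one, ptrA_kronecker_one_mul, ← ptrA_one_kronecker_mul_comm,
    ← Matrix.mul_assoc, ← mul_kronecker_mul, Matrix.one_mul, Matrix.mul_assoc Q]

theorem ptrA_one_kronecker_mul_dephase {ks ka : ℕ} (PrS : Fin ks → Matrix (Fin s) (Fin s) ℂ)
    (PrA : Fin ka → Matrix (Fin a) (Fin a) ℂ) (E : Matrix (Fin a) (Fin a) ℂ)
    (X : Matrix (Fin s × Fin a) (Fin s × Fin a) ℂ) :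
    ptrA (((1 : Matrix (Fin s) (Fin s) ℂ) ⊗ₖ E) *
        ∑ l, ∑ m, (PrS l ⊗ₖ PrA m) * X * (PrS l ⊗ₖ PrA m)) =
      ∑ l, PrS l *
        ptrA (((1 : Matrix (Fin s) (Fin s) ℂ) ⊗ₖ ∑ m, PrA m * E * PrA m) * X) * PrS l := by
  simp only [Finset.mul_sum, ptrA_sum, ptrA_one_kronecker_mul_conj_kronecker, kronecker_sum,
    Finset.sum_mul]

end PartialTrace

theorem dilation_dephasingCovariant_general {s a ks ka : ℕ}
    (PrS : Fin ks → Matrix (Fin s) (Fin s) ℂ)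
    (PrA : Fin ka → Matrix (Fin a) (Fin a) ℂ)
    (σ : Matrix (Fin a) (Fin a) ℂ)
    (hσinc : ∑ m, PrA m * σ * PrA m = σ)
    (Eop : Matrix (Fin a) (Fin a) ℂ)
    (hEinc : ∑ m, PrA m * Eop * PrA m = Eop)
    (V : Matrix (Fin s × Fin a) (Fin s × Fin a) ℂ)
    (hVcov : ∀ M : Matrix (Fin s × Fin a) (Fin s × Fin a) ℂ,
      ∑ l, ∑ m, (PrS l ⊗ₖ PrA m) * (V * M * Vᴴ) * (PrS l ⊗ₖ PrA m) =
        V * (∑ l, ∑ m, (PrS l ⊗ₖ PrA m) * M * (PrS l ⊗ₖ PrA m)) * Vᴴ) :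
    ∀ ρ : Matrix (Fin s) (Fin s) ℂ,
      ptrA (((1 : Matrix (Fin s) (Fin s) ℂ) ⊗ₖ Eop) *
          (V * ((∑ l, PrS l * ρ * PrS l) ⊗ₖ σ) * Vᴴ)) =
        ∑ l, PrS l *
            ptrA (((1 : Matrix (Fin s) (Fin s) ℂ) ⊗ₖ Eop) * (V * (ρ ⊗ₖ σ) * Vᴴ)) *
            PrS l := by
  intro ρ
  have hdephase : (∑ l, PrS l * ρ * PrS l) ⊗ₖ σ =
      ∑ l, ∑ m, (PrS l ⊗ₖ PrA m) * (ρ ⊗ₖ σ) * (PrS l ⊗ₖ PrA m) := by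
    conv_lhs => rw [← hσinc]
    exact sum_conj_kronecker_sum_conj PrS PrA ρ σ
  rw [hdephase, ← hVcov, ptrA_one_kronecker_mul_dephase, hEinc]

/-- If `σ` is an incoherent ancilla state (`D_A(σ) = σ`), `E` an incoherent ancilla effect
(`D_A(E) = E`), and the unitary channel `V(·)V†` on the composite is dephasing-covariant
with respect to `D_{SA} = D_S ⊗ D_A`, then the operation `ρ ↦ Tr_A(E · V(ρ ⊗ σ)V†)` is
dephasing-covariant: `E ∘ D_S = D_S ∘ E`. -/
theorem dilation_dephasingCovariant {s a ks ka : ℕ}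
    (PrS : Fin ks → Matrix (Fin s) (Fin s) ℂ)
    (PrA : Fin ka → Matrix (Fin a) (Fin a) ℂ)
    (hhermS : ∀ l, (PrS l).IsHermitian)
    (horthS : ∀ l l', PrS l * PrS l' = if l = l' then PrS l else 0)
    (hsumS : ∑ l, PrS l = 1)
    (hhermA : ∀ m, (PrA m).IsHermitian)
    (horthA : ∀ m m', PrA m * PrA m' = if m = m' then PrA m else 0)
    (hsumA : ∑ m, PrA m = 1)
    (σ : Matrix (Fin a) (Fin a) ℂ) (hσ : σ.PosSemidef) (hσtr : σ.trace = 1)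
    (hσinc : ∑ m, PrA m * σ * PrA m = σ)
    (Eop : Matrix (Fin a) (Fin a) ℂ) (hE1 : Eop.PosSemidef)
    (hE2 : ((1 : Matrix (Fin a) (Fin a) ℂ) - Eop).PosSemidef)
    (hEinc : ∑ m, PrA m * Eop * PrA m = Eop)
    (V : Matrix (Fin s × Fin a) (Fin s × Fin a) ℂ)
    (hV : V * Vᴴ = 1 ∧ Vᴴ * V = 1)
    (hVcov : ∀ M : Matrix (Fin s × Fin a) (Fin s × Fin a) ℂ,
      ∑ l, ∑ m, (PrS l ⊗ₖ PrA m) * (V * M * Vᴴ) * (PrS l ⊗ₖ PrA m) =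
        V * (∑ l, ∑ m, (PrS l ⊗ₖ PrA m) * M * (PrS l ⊗ₖ PrA m)) * Vᴴ) :
    ∀ ρ : Matrix (Fin s) (Fin s) ℂ,
      ptrA (((1 : Matrix (Fin s) (Fin s) ℂ) ⊗ₖ Eop) *
          (V * ((∑ l, PrS l * ρ * PrS l) ⊗ₖ σ) * Vᴴ)) =
        ∑ l, PrS l *
            ptrA (((1 : Matrix (Fin s) (Fin s) ℂ) ⊗ₖ Eop) * (V * (ρ ⊗ₖ σ) * Vᴴ)) *
            PrS l :=
  dilation_dephasingCovariant_general PrS PrA σ hσinc Eop hEinc V hVcov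
end

section
/- A linear map E on operators is incoherence-preserving (maps all states fixed by D to states fixed by D) if and only if E ∘ D = D ∘ E ∘ D. -/
open Matrix
open scoped ComplexOrder

/-!
Write `D` for the dephasing map. It is idempotent, positive and trace preserving, so for every
state `ρ` the matrix `D ρ` is an incoherent state; if `E` preserves incoherence this gives
`D (E (D ρ)) = E (D ρ)`. Every positive semidefinite matrix is a nonnegative multiple of a state,
and positive elements span any C⋆-algebra, so states span all matrices and
`D ∘ E ∘ D = E ∘ D`.
Conversely, an incoherent `ρ` satisfies `E ρ = E (D ρ) = D (E (D ρ)) = D (E ρ)`.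
-/

namespace Matrix

variable {n : Type*} [Fintype n] [DecidableEq n]

open scoped MatrixOrder Matrix.Norms.L2Operator in
theorem span_posSemidef_eq_top :
    Submodule.span ℂ {A : Matrix n n ℂ | A.PosSemidef} = ⊤ := by
  simpa only [nonneg_iff_posSemidef] using CStarAlgebra.span_nonneg (A := Matrix n n ℂ)

theorem span_posSemidef_trace_one_eq_top :
    Submodule.span ℂ {ρ : Matrix n n ℂ | ρ.PosSemidef ∧ ρ.trace = 1} = ⊤ := by
  rw [eq_top_iff, ← span_posSemidef_eq_top, Submodule.span_le]
  intro A (hA : A.PosSemidef)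
  obtain htr | htr := eq_or_ne A.trace 0
  · simp [(hA.trace_eq_zero_iff).mp htr]
  · have hnormalized : A.trace⁻¹ • A ∈
        Submodule.span ℂ {ρ : Matrix n n ℂ | ρ.PosSemidef ∧ ρ.trace = 1} :=
      Submodule.subset_span ⟨hA.smul (inv_nonneg.mpr hA.trace_nonneg),
        by rw [trace_smul, smul_eq_mul, inv_mul_cancel₀ htr]⟩
    simpa [smul_smul, mul_inv_cancel₀ htr] using Submodule.smul_mem _ A.trace hnormalized

section Dephasing

variable {ι R : Type*} [Fintype ι] [CommSemiring R] (P : ι → Matrix n n R)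

def dephasing : Matrix n n R →ₗ[R] Matrix n n R :=
  ∑ l, LinearMap.mulLeftRight R (P l, P l)

@[simp]
theorem dephasing_apply (A : Matrix n n R) : dephasing P A = ∑ l, P l * A * P l := by
  simp [dephasing]

variable {P}

theorem dephasing_idempotent [DecidableEq ι]
    (horth : ∀ l l', P l * P l' = if l = l' then P l else 0) (A : Matrix n n R) :
    dephasing P (dephasing P A) = dephasing P A := by
  have hblock : ∀ l m, P l * (P m * A * P m) * P l = if l = m then P l * A * P l else 0 := by
    intro l m
    calc P l * (P m * A * P m) * P l = (P l * P m) * A * (P m * P l) := by simp only [mul_assoc]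
      _ = _ := by
        split_ifs with h
        · simp [horth, h]
        · simp [horth, h, Ne.symm h]
  simp only [dephasing_apply, Finset.mul_sum, Finset.sum_mul, hblock, Finset.sum_ite_eq,
    Finset.mem_univ, if_true]

theorem trace_dephasing [DecidableEq ι]
    (horth : ∀ l l', P l * P l' = if l = l' then P l else 0) (hsum : ∑ l, P l = 1)
    (A : Matrix n n R) : (dephasing P A).trace = A.trace := by
  have hblock : ∀ l, (P l * A * P l).trace = (P l * A).trace := by
    intro l
    rw [trace_mul_cycle, horth, if_pos rfl]
  calc (dephasing P A).trace = (∑ l, P l * A).trace := by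
        simp only [dephasing_apply, trace_sum, hblock]
    _ = A.trace := by rw [← Finset.sum_mul, hsum, one_mul]

theorem PosSemidef.dephasing {𝕜 : Type*} [RCLike 𝕜] {P : ι → Matrix n n 𝕜}
    (hherm : ∀ l, (P l).IsHermitian) {A : Matrix n n 𝕜} (hA : A.PosSemidef) :
    (dephasing P A).PosSemidef := by
  rw [dephasing_apply]
  refine Finset.sum_induction _ PosSemidef (fun _ _ => PosSemidef.add) PosSemidef.zero
    fun l _ => ?_
  simpa only [(hherm l).eq] using hA.conjTranspose_mul_mul_same (P l)

end Dephasing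

theorem comp_comp_eq_comp_of_preserves_fixed_states
    {D E : Matrix n n ℂ →ₗ[ℂ] Matrix n n ℂ} (hD_idem : ∀ A, D (D A) = D A)
    (hD_pos : ∀ A, A.PosSemidef → (D A).PosSemidef) (hD_trace : ∀ A, (D A).trace = A.trace)
    (hE : ∀ ρ, ρ.PosSemidef → ρ.trace = 1 → D ρ = ρ → D (E ρ) = E ρ) :
    D ∘ₗ E ∘ₗ D = E ∘ₗ D :=
  LinearMap.ext_on span_posSemidef_trace_one_eq_top fun ρ ⟨hρ, hρ_trace⟩ =>
    hE (D ρ) (hD_pos ρ hρ) (by rw [hD_trace, hρ_trace]) (hD_idem ρ)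

end Matrix

theorem incoherencePreserving_iff_DED_general {n k : ℕ}
    (Pr : Fin k → Matrix (Fin n) (Fin n) ℂ)
    (hherm : ∀ l, (Pr l).IsHermitian)
    (horth : ∀ l l', Pr l * Pr l' = if l = l' then Pr l else 0)
    (hsum : ∑ l, Pr l = 1)
    (E : Matrix (Fin n) (Fin n) ℂ →ₗ[ℂ] Matrix (Fin n) (Fin n) ℂ) :
    (∀ ρ : Matrix (Fin n) (Fin n) ℂ, ρ.PosSemidef → ρ.trace = 1 →
        (∑ l, Pr l * ρ * Pr l = ρ) → ∑ l, Pr l * E ρ * Pr l = E ρ) ↔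
    (∀ A : Matrix (Fin n) (Fin n) ℂ,
      E (∑ l, Pr l * A * Pr l) =
        ∑ l, Pr l * E (∑ l', Pr l' * A * Pr l') * Pr l) := by
  constructor
  · intro hE A
    have hDED := comp_comp_eq_comp_of_preserves_fixed_states (E := E)
      (dephasing_idempotent horth) (fun _ => PosSemidef.dephasing hherm)
      (trace_dephasing horth hsum) (by simpa only [dephasing_apply] using hE)
    simpa only [LinearMap.comp_apply, dephasing_apply] using (LinearMap.congr_fun hDED A).symm
  · intro hDED ρ _ _ hρ
    simpa only [hρ] using (hDED ρ).symm

/-- A positive trace-preserving linear map `E` is incoherence-preserving (it maps every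
state fixed by the dephasing map `D` to a state fixed by `D`) if and only if
`E ∘ D = D ∘ E ∘ D`. -/
theorem incoherencePreserving_iff_DED {n k : ℕ}
    (Pr : Fin k → Matrix (Fin n) (Fin n) ℂ)
    (hherm : ∀ l, (Pr l).IsHermitian)
    (horth : ∀ l l', Pr l * Pr l' = if l = l' then Pr l else 0)
    (hsum : ∑ l, Pr l = 1)
    (E : Matrix (Fin n) (Fin n) ℂ →ₗ[ℂ] Matrix (Fin n) (Fin n) ℂ)
    (hpos : ∀ A : Matrix (Fin n) (Fin n) ℂ, A.PosSemidef → (E A).PosSemidef)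
    (htp : ∀ A : Matrix (Fin n) (Fin n) ℂ, (E A).trace = A.trace) :
    (∀ ρ : Matrix (Fin n) (Fin n) ℂ, ρ.PosSemidef → ρ.trace = 1 →
        (∑ l, Pr l * ρ * Pr l = ρ) → ∑ l, Pr l * E ρ * Pr l = E ρ) ↔
    (∀ A : Matrix (Fin n) (Fin n) ℂ,
      E (∑ l, Pr l * A * Pr l) =
        ∑ l, Pr l * E (∑ l', Pr l' * A * Pr l') * Pr l) :=
  incoherencePreserving_iff_DED_general Pr hherm horth hsum E
end

section
/- For pure states, the trace-norm coherence measure F_L(|ψ⟩⟨ψ|) = ‖[|ψ⟩⟨ψ|, L]‖₁ equals twice the standard deviation of L: F_L(|ψ⟩⟨ψ|) = 2·√(⟨ψ|L²|ψ⟩ − ⟨ψ|L|ψ⟩²). -/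
open Matrix
open scoped ComplexOrder

/-- The trace norm (sum of singular values) of a complex matrix: `‖B‖₁ = Tr √(B†B)`. -/
noncomputable def traceNorm {n : ℕ} (B : Matrix (Fin n) (Fin n) ℂ) : ℝ :=
  ((Matrix.posSemidef_conjTranspose_mul_self B).1.eigenvectorUnitary.1 *
    diagonal (((↑) : ℝ → ℂ) ∘ (√·) ∘ (Matrix.posSemidef_conjTranspose_mul_self B).1.eigenvalues) *
    (star (Matrix.posSemidef_conjTranspose_mul_self B).1.eigenvectorUnitary :
      Matrix (Fin n) (Fin n) ℂ)).trace.re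

/-!
Write `⟨L⟩ = ⟨ψ|L|ψ⟩`, which is real, and `χ = Lψ - ⟨L⟩ψ`. Then `χ ⟂ ψ`, `‖χ‖² = ⟨L²⟩ - ⟨L⟩²`
and `[|ψ⟩⟨ψ|, L] = |ψ⟩⟨χ| - |χ⟩⟨ψ|`. For a unit vector `u` and `v ⟂ u`, the matrix
`C = |u⟩⟨v| - |v⟩⟨u|` has `C†C = ‖v‖² |u⟩⟨u| + |v⟩⟨v|`, whose positive square root
`‖v‖ |u⟩⟨u| + ‖v‖⁻¹ |v⟩⟨v|` has trace `2‖v‖`.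
-/

namespace Matrix

variable {n : ℕ}

theorem re_dotProduct_star_self_nonneg (v : Fin n → ℂ) : 0 ≤ (star v ⬝ᵥ v).re :=
  (Complex.le_def.1 (dotProduct_star_self_nonneg v)).1

theorem ofReal_re_dotProduct_star_self (v : Fin n → ℂ) : ((star v ⬝ᵥ v).re : ℂ) = star v ⬝ᵥ v :=
  (Complex.eq_re_of_ofReal_le (r := 0) (by simp [dotProduct_star_self_nonneg])).symm

theorem IsHermitian.star_mulVec_dotProduct {A : Matrix (Fin n) (Fin n) ℂ} (hA : A.IsHermitian)
    (v w : Fin n → ℂ) : star (A *ᵥ v) ⬝ᵥ w = star v ⬝ᵥ A *ᵥ w := by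
  rw [star_mulVec, hA.eq, ← dotProduct_mulVec]

theorem IsHermitian.ofReal_re_star_dotProduct_mulVec_self {A : Matrix (Fin n) (Fin n) ℂ}
    (hA : A.IsHermitian) (v : Fin n → ℂ) :
    ((star v ⬝ᵥ A *ᵥ v).re : ℂ) = star v ⬝ᵥ A *ᵥ v := by
  refine Complex.conj_eq_iff_re.mp (?_ : star _ = _)
  rw [← star_dotProduct_star, star_star, hA.star_mulVec_dotProduct]

theorem IsHermitian.vecMulVec_mul_sub_mul_vecMulVec {L : Matrix (Fin n) (Fin n) ℂ}
    (hL : L.IsHermitian) (ψ : Fin n → ℂ) (a : ℝ) :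
    vecMulVec ψ (star ψ) * L - L * vecMulVec ψ (star ψ) =
      vecMulVec ψ (star (L *ᵥ ψ - a • ψ)) - vecMulVec (L *ᵥ ψ - a • ψ) (star ψ) := by
  have hstar : star ψ ᵥ* L = star (L *ᵥ ψ) := by rw [star_mulVec, hL.eq]
  rw [vecMulVec_mul, mul_vecMulVec, hstar, star_sub, star_smul, star_trivial a, vecMulVec_sub,
    sub_vecMulVec, vecMulVec_smul, smul_vecMulVec]
  abel

theorem IsHermitian.star_dotProduct_mulVec_sub_smul_eq_zero {L : Matrix (Fin n) (Fin n) ℂ}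
    (hL : L.IsHermitian) {ψ : Fin n → ℂ} (hψ : star ψ ⬝ᵥ ψ = 1) :
    star ψ ⬝ᵥ (L *ᵥ ψ - (star ψ ⬝ᵥ L *ᵥ ψ).re • ψ) = 0 := by
  rw [dotProduct_sub, dotProduct_smul, hψ, Complex.real_smul, mul_one,
    hL.ofReal_re_star_dotProduct_mulVec_self, sub_self]

theorem IsHermitian.re_star_dotProduct_self_mulVec_sub_smul {L : Matrix (Fin n) (Fin n) ℂ}
    (hL : L.IsHermitian) {ψ : Fin n → ℂ} (hψ : star ψ ⬝ᵥ ψ = 1) :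
    (star (L *ᵥ ψ - (star ψ ⬝ᵥ L *ᵥ ψ).re • ψ) ⬝ᵥ (L *ᵥ ψ - (star ψ ⬝ᵥ L *ᵥ ψ).re • ψ)).re =
      (star ψ ⬝ᵥ (L * L) *ᵥ ψ).re - (star ψ ⬝ᵥ L *ᵥ ψ).re ^ 2 := by
  set a := (star ψ ⬝ᵥ L *ᵥ ψ).re with ha
  have hLψ : star (L *ᵥ ψ) ⬝ᵥ ψ = a := by
    rw [hL.star_mulVec_dotProduct, hL.ofReal_re_star_dotProduct_mulVec_self]
  rw [star_sub, star_smul, star_trivial a, sub_dotProduct, dotProduct_sub, dotProduct_sub,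
    smul_dotProduct, smul_dotProduct, dotProduct_smul, dotProduct_smul, hL.star_mulVec_dotProduct,
    ← mulVec_mulVec, hLψ, hψ]
  simp only [Complex.real_smul, Complex.sub_re, Complex.mul_re, Complex.ofReal_re,
    Complex.ofReal_im, Complex.one_re, Complex.one_im, ← ha]
  ring

end Matrix

section TraceNorm

variable {n : ℕ}

open scoped MatrixOrder in
/-- The matrix in the definition of `traceNorm` is `CFC.sqrt (Bᴴ * B)`, and positive square roots
are unique. -/
theorem traceNorm_eq_re_trace_of_mul_self {B S : Matrix (Fin n) (Fin n) ℂ} (hS : S.PosSemidef)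
    (hSB : S * S = Bᴴ * B) : traceNorm B = S.trace.re := by
  have hBB := posSemidef_conjTranspose_mul_self B
  suffices hsqrt : hBB.1.eigenvectorUnitary.1 *
      diagonal (((↑) : ℝ → ℂ) ∘ (√·) ∘ hBB.1.eigenvalues) *
      (star hBB.1.eigenvectorUnitary : Matrix (Fin n) (Fin n) ℂ) = S by
    rw [traceNorm, hsqrt]
  have hcfc : hBB.1.eigenvectorUnitary.1 *
      diagonal (((↑) : ℝ → ℂ) ∘ (√·) ∘ hBB.1.eigenvalues) *
      (star hBB.1.eigenvectorUnitary : Matrix (Fin n) (Fin n) ℂ) = CFC.sqrt (Bᴴ * B) := by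
    rw [CFC.sqrt_eq_cfc, cfc_nnreal_eq_real _ _, hBB.1.cfc_eq]
    simp only [IsHermitian.cfc, Unitary.conjStarAlgAut_apply, Real.coe_sqrt, Real.coe_toNNReal']
    congr 3
    funext i
    exact congrArg (fun x : ℝ => ((√x : ℝ) : ℂ)) (max_eq_left (hBB.eigenvalues_nonneg i)).symm
  rw [hcfc, CFC.sqrt_eq_iff _ _ hBB.nonneg hS.nonneg, hSB]

theorem traceNorm_zero : traceNorm (0 : Matrix (Fin n) (Fin n) ℂ) = 0 := by
  simpa using traceNorm_eq_re_trace_of_mul_self (B := 0) PosSemidef.zero (by simp)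

theorem traceNorm_vecMulVec_sub_vecMulVec {u v : Fin n → ℂ} (hu : star u ⬝ᵥ u = 1)
    (huv : star u ⬝ᵥ v = 0) :
    traceNorm (vecMulVec u (star v) - vecMulVec v (star u)) = 2 * √(star v ⬝ᵥ v).re := by
  rcases eq_or_ne v 0 with rfl | hv
  · simp [traceNorm_zero]
  set s := √(star v ⬝ᵥ v).re
  have hss : (s ^ 2 : ℝ) = star v ⬝ᵥ v := by
    rw [Real.sq_sqrt (re_dotProduct_star_self_nonneg v), ofReal_re_dotProduct_star_self]
  have hs : s ≠ 0 := by
    intro h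
    rw [h, zero_pow two_ne_zero, Complex.ofReal_zero, eq_comm, dotProduct_star_self_eq_zero] at hss
    exact hv hss
  have hvu : star v ⬝ᵥ u = 0 := by rw [star_dotProduct, huv, star_zero]
  have hgram : (vecMulVec u (star v) - vecMulVec v (star u))ᴴ *
      (vecMulVec u (star v) - vecMulVec v (star u)) =
      (star v ⬝ᵥ v) • vecMulVec u (star u) + vecMulVec v (star v) := by
    simp only [conjTranspose_sub, conjTranspose_vecMulVec, star_star, sub_mul, mul_sub,
      vecMulVec_mul_vecMulVec, hu, huv, hvu, zero_smul, one_smul, vecMulVec_zero, vecMulVec_smul]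
    abel
  set S := s • vecMulVec u (star u) + s⁻¹ • vecMulVec v (star v)
  have hS : S.PosSemidef :=
    ((posSemidef_vecMulVec_self_star u).smul (Real.sqrt_nonneg _)).add
      ((posSemidef_vecMulVec_self_star v).smul (inv_nonneg.mpr (Real.sqrt_nonneg _)))
  have hSS : S * S = (vecMulVec u (star v) - vecMulVec v (star u))ᴴ *
      (vecMulVec u (star v) - vecMulVec v (star u)) := by
    simp only [S, hgram, add_mul, mul_add, smul_mul_smul_comm, vecMulVec_mul_vecMulVec, hu, huv,
      hvu, zero_smul, one_smul, vecMulVec_zero, vecMulVec_smul, smul_zero, add_zero, zero_add,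
      ← hss]
    have hs_inv : s⁻¹ * s⁻¹ * s ^ 2 = 1 := by field_simp
    rw [Complex.coe_smul, Complex.coe_smul, smul_smul, ← sq, hs_inv, one_smul]
  rw [traceNorm_eq_re_trace_of_mul_self hS hSS]
  simp only [S, trace_add, trace_smul, trace_vecMulVec, dotProduct_comm _ (star _), hu, ← hss]
  rw [Complex.add_re, Complex.smul_re, Complex.smul_re, Complex.one_re, Complex.ofReal_re,
    smul_eq_mul, smul_eq_mul, mul_one, sq, ← mul_assoc, inv_mul_cancel₀ hs, one_mul, two_mul]

end TraceNorm

/-- For a pure state `|ψ⟩⟨ψ|`, the trace-norm coherence measure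
`F_L = ‖[|ψ⟩⟨ψ|, L]‖₁` equals twice the standard deviation of `L` in `|ψ⟩`:
`F_L = 2 √(⟨ψ|L²|ψ⟩ − ⟨ψ|L|ψ⟩²)`. -/
theorem traceNorm_commutator_pure_state {n : ℕ}
    (L : Matrix (Fin n) (Fin n) ℂ) (hL : L.IsHermitian)
    (ψ : Fin n → ℂ) (hψ : star ψ ⬝ᵥ ψ = 1) :
    traceNorm (Matrix.vecMulVec ψ (star ψ) * L - L * Matrix.vecMulVec ψ (star ψ)) =
      2 * Real.sqrt ((star ψ ⬝ᵥ (L * L).mulVec ψ).re -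
        ((star ψ ⬝ᵥ L.mulVec ψ).re) ^ 2) := by
  rw [hL.vecMulVec_mul_sub_mul_vecMulVec ψ (star ψ ⬝ᵥ L *ᵥ ψ).re,
    traceNorm_vecMulVec_sub_vecMulVec hψ (hL.star_dotProduct_mulVec_sub_smul_eq_zero hψ),
    hL.re_star_dotProduct_self_mulVec_sub_smul hψ]
end
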